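/- Let M be an n×n matrix with entries in {0,1}, n ≥ 2, such that some column of M has exactly one entry equal to 0 and the remaining n-1 entries equal to 1. Then |det(M)| ≤ 2·α_{n-1}. -/

import Mathlib

/-- A square real matrix has all entries in {0,1}. -/
def IsZeroOne {k : ℕ} (M : Matrix (Fin k) (Fin k) ℝ) : Prop :=
  ∀ i j, M i j = 0 ∨ M i j = 1

/-- `alpha k` is the maximum of `|det M|` over k×k 0–1 matrices. -/
noncomputable def alpha (k : ℕ) : ℝ :=
  sSup {x : ℝ | ∃ M : Matrix (Fin k) (Fin k) ℝ, IsZeroOne M ∧ x = |M.det|}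

/-!
Writing column `j` of `M` as `𝟙 - eᵢ₀` splits `det M` into `det M₁ - det M₀`, where `M₁` and
`M₀` carry `𝟙` and `eᵢ₀` in column `j`. Expanding along that column, `det M₀` is, up to sign, a
0–1 minor of `M`. Subtracting row `i₀` of `M₁` from the other rows turns its column `j` into
`eᵢ₀`; the remaining minor has entries `M i k - M i₀ k`, and negating the columns where
`M i₀ k = 1` makes it 0–1 again.
-/

open Matrix

lemma IsZeroOne.submatrix {k n : ℕ} {A : Matrix (Fin n) (Fin n) ℝ} (hA : IsZeroOne A)
    (f g : Fin k → Fin n) : IsZeroOne (A.submatrix f g) :=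
  fun i j => hA (f i) (g j)

lemma abs_det_le_alpha {k : ℕ} {A : Matrix (Fin k) (Fin k) ℝ} (hA : IsZeroOne A) :
    |A.det| ≤ alpha k := by
  refine le_csSup ⟨k.factorial, ?_⟩ ⟨A, hA, rfl⟩
  rintro _ ⟨B, hB, rfl⟩
  simpa using det_le (A := B) (abv := AbsoluteValue.abs) (x := (1 : ℝ))
    fun i j => by rcases hB i j with h | h <;> simp [h]

lemma abs_det_eq_abs_det_submatrix_of_col_eq_single {R : Type*} [CommRing R] [LinearOrder R]
    [IsStrictOrderedRing R] {m : ℕ} {A : Matrix (Fin (m + 1)) (Fin (m + 1)) R} {i₀ j : Fin (m + 1)}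
    (hA : ∀ i, A i j = (Pi.single i₀ 1 : Fin (m + 1) → R) i) :
    |A.det| = |(A.submatrix i₀.succAbove j.succAbove).det| := by
  rw [det_succ_column A j, Finset.sum_eq_single i₀ (fun i _ hi => by simp [hA, hi]) (by simp)]
  simp [hA, abs_mul]

lemma abs_det_sub_row_le_alpha {m : ℕ} {A : Matrix (Fin m) (Fin m) ℝ} (hA : IsZeroOne A)
    {v : Fin m → ℝ} (hv : ∀ k, v k = 0 ∨ v k = 1) :
    |(of fun i k => A i k - v k).det| ≤ alpha m := by
  set B : Matrix (Fin m) (Fin m) ℝ := of fun i k => |A i k - v k|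
  have hflip : (of fun i k => A i k - v k) = of fun i k => (1 - 2 * v k) * B i k := by
    ext i k
    rcases hA i k with h | h <;> rcases hv k with h' | h' <;> norm_num [B, h, h']
  have hsign : ∀ k, |1 - 2 * v k| = 1 := fun k => by rcases hv k with h | h <;> norm_num [h]
  rw [hflip, det_mul_row, abs_mul, Finset.abs_prod, Finset.prod_eq_one fun k _ => hsign k, one_mul]
  refine abs_det_le_alpha fun i k => ?_
  rcases hA i k with h | h <;> rcases hv k with h' | h' <;> norm_num [B, h, h']

section

variable {m : ℕ} {M : Matrix (Fin (m + 1)) (Fin (m + 1)) ℝ}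

lemma abs_det_updateCol_single_le_alpha (hM : IsZeroOne M) (i₀ j : Fin (m + 1)) :
    |(M.updateCol j (Pi.single i₀ 1)).det| ≤ alpha m := by
  rw [abs_det_eq_abs_det_submatrix_of_col_eq_single (i₀ := i₀) (j := j) (by simp),
    submatrix_updateCol_succAbove]
  exact abs_det_le_alpha (hM.submatrix _ _)

lemma abs_det_updateCol_one_le_alpha (hM : IsZeroOne M) (i₀ j : Fin (m + 1)) :
    |(M.updateCol j fun _ => 1).det| ≤ alpha m := by
  set M₁ := M.updateCol j fun _ => 1
  set c : Fin (m + 1) → ℝ := Function.update (fun _ => -1) i₀ 0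
  set M₂ : Matrix (Fin (m + 1)) (Fin (m + 1)) ℝ := of fun i k => M₁ i k + c i * M₁ i₀ k
  have hdet : M₂.det = M₁.det :=
    det_eq_of_forall_row_eq_smul_add_const c i₀ (by simp [c]) fun _ _ => rfl
  have hcol : ∀ i, M₂ i j = (Pi.single i₀ 1 : Fin (m + 1) → ℝ) i := fun i => by
    by_cases hi : i = i₀ <;> simp [M₂, M₁, c, hi]
  have hminor : M₂.submatrix i₀.succAbove j.succAbove =
      of fun a b => M.submatrix i₀.succAbove j.succAbove a b - M i₀ (j.succAbove b) := by
    ext a b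
    simp [M₂, M₁, c, Fin.succAbove_ne i₀ a, sub_eq_add_neg]
  rw [← hdet, abs_det_eq_abs_det_submatrix_of_col_eq_single hcol, hminor]
  exact abs_det_sub_row_le_alpha (hM.submatrix _ _) fun k => hM i₀ _

end

theorem stmt_1_general {n : ℕ} (M : Matrix (Fin n) (Fin n) ℝ)
    (hM : IsZeroOne M) (j : Fin n) (i₀ : Fin n)
    (h0 : M i₀ j = 0) (h1 : ∀ i, i ≠ i₀ → M i j = 1) :
    |M.det| ≤ 2 * alpha (n - 1) := by
  obtain ⟨m, rfl⟩ : ∃ m, n = m + 1 := ⟨n - 1, by have := j.pos; omega⟩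
  have hsplit :
      M.det = (M.updateCol j fun _ => 1).det - (M.updateCol j (Pi.single i₀ 1)).det := by
    have hones : (fun _ => (1 : ℝ)) = (fun i => M i j) + Pi.single i₀ 1 := by
      funext i
      by_cases hi : i = i₀ <;> simp [hi, h0, h1]
    rw [hones, det_updateCol_add, updateCol_eq_self]
    ring
  calc |M.det| ≤ |(M.updateCol j fun _ => 1).det| + |(M.updateCol j (Pi.single i₀ 1)).det| :=
        hsplit ▸ abs_sub _ _
    _ ≤ alpha m + alpha m := add_le_add (abs_det_updateCol_one_le_alpha hM i₀ j)
        (abs_det_updateCol_single_le_alpha hM i₀ j)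
    _ = 2 * alpha (m + 1 - 1) := by rw [Nat.add_sub_cancel, two_mul]

theorem stmt_1 {n : ℕ} (hn : 2 ≤ n) (M : Matrix (Fin n) (Fin n) ℝ)
    (hM : IsZeroOne M) (j : Fin n) (i₀ : Fin n)
    (h0 : M i₀ j = 0) (h1 : ∀ i, i ≠ i₀ → M i j = 1) :
    |M.det| ≤ 2 * alpha (n - 1) :=
  stmt_1_general M hM j i₀ h0 h1
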